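/- For every player p, every history h, and every semantics ⋆ ∈ {S, A}: if a Dirac move a of player p at last(h) is not ⋆-dominated at h by any other Dirac move, then a is ⋆-admissible at h (i.e., a is not ⋆-dominated at h by any randomised move). -/

import Mathlib

open scoped Classical

noncomputable section

/-- Run of a deterministic automaton along an infinite word. -/
def autRun {α Q : Type} (q0 : Q) (d : Q → α → Q) (ρ : ℕ → α) : ℕ → Q
  | 0 => q0
  | k + 1 => d (autRun q0 d ρ k) (ρ k)

/-- A concurrent game played on a finite graph. -/
structure ConcGame where
  S : Type
  A : Type
  P : Type
  [fS : Fintype S]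
  [fA : Fintype A]
  [fP : Fintype P]
  [dS : DecidableEq S]
  [dA : DecidableEq A]
  [dP : DecidableEq P]
  init : S
  act : P → S → Set A
  act_nonempty : ∀ p s, (act p s).Nonempty
  tr : S → (P → A) → S

open MeasureTheory

namespace ConcGame

attribute [instance] ConcGame.fS ConcGame.fA ConcGame.fP ConcGame.dS ConcGame.dA ConcGame.dP

inductive Sem where
  | Sure : Sem
  | Almost : Sem

variable (G : ConcGame)

instance : MeasurableSpace G.S := ⊤

/-- Randomised move of player `p` at state `s`: a probability distribution on `act p s`. -/
def Mixed (p : G.P) (s : G.S) : Type :=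
  { f : G.A → ℝ // (∀ a, 0 ≤ f a) ∧ (∑ a, f a) = 1 ∧ ∀ a, f a ≠ 0 → a ∈ G.act p s }

/-- Support of a randomised move. -/
def Supp {p : G.P} {s : G.S} (α : G.Mixed p s) : Set G.A := { a | α.1 a ≠ 0 }

/-- A randomised move is Dirac if it puts all mass on one action. -/
def IsDirac {p : G.P} {s : G.S} (α : G.Mixed p s) : Prop := ∃ a, α.1 a = 1

/-- The Dirac move on action `a`. -/
def dirac (p : G.P) (s : G.S) (a : G.A) (ha : a ∈ G.act p s) : G.Mixed p s :=
  ⟨fun b => if b = a then 1 else 0, by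
    refine ⟨fun b => ?_, ?_, fun b hb => ?_⟩
    · by_cases h : b = a <;> simp [h]
    · simp
    · by_cases h : b = a
      · subst h; exact ha
      · simp [h] at hb⟩

/-- The last state of a history (the initial state for the empty list). -/
def lastS (l : List G.S) : G.S := l.getLast?.getD G.init

/-- One step of the game graph. -/
def Step (s s' : G.S) : Prop :=
  ∃ m : G.P → G.A, (∀ p, m p ∈ G.act p s) ∧ G.tr s m = s'

/-- Histories: finite paths starting at the initial state. -/
def IsHistory (l : List G.S) : Prop := l.head? = some G.init ∧ l.Chain' G.Step

/-- Runs: infinite sequences of states. -/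
abbrev Run : Type := ℕ → G.S

/-- A strategy of player `p`: maps each history to a randomised move at its last state. -/
def Strategy (p : G.P) : Type := (l : List G.S) → G.Mixed p (G.lastS l)

/-- A profile of strategies, one per player. -/
def Profile : Type := ∀ p : G.P, G.Strategy p

/-- A strategy for the coalition `-p` of all players other than `p`. -/
def CoStrategy (p : G.P) : Type := ∀ q : G.P, q ≠ p → G.Strategy q

/-- Combining a strategy of `p` with a coalition strategy of `-p` into a profile. -/
def combine {p : G.P} (σ : G.Strategy p) (τ : G.CoStrategy p) : G.Profile :=
  fun q => if h : q = p then (by subst h; exact σ) else τ q h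

/-- One-step transition probability when each player independently samples its move. -/
def stepProb (s : G.S) (β : G.P → G.A → ℝ) (s' : G.S) : ℝ :=
  ∑ m ∈ Finset.univ.filter (fun m : G.P → G.A => G.tr s m = s'), ∏ p, β p (m p)

/-- Probability of the cylinder of a history under a profile. -/
def cylProb (σv : G.Profile) (l : List G.S) : ℝ :=
  ∏ i ∈ Finset.range (l.length - 1),
    G.stepProb (G.lastS (l.take (i + 1))) (fun p => (σv p (l.take (i + 1))).1)
      (G.lastS (l.take (i + 2)))

/-- The cylinder of a finite word: runs having it as a prefix. -/
def Cyl (l : List G.S) : Set G.Run := { ρ | ∀ i, i < l.length → ρ i = l.getD i G.init }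

/-- Histories with positive probability under a profile. -/
def HistOf (σv : G.Profile) : Set (List G.S) :=
  { l | G.IsHistory l ∧ 0 < G.cylProb σv l }

/-- The prefix of length `k+1` of a run. -/
def prefixList (ρ : G.Run) (k : ℕ) : List G.S := (List.range (k + 1)).map ρ

/-- Outcome of a profile: runs all of whose prefixes have positive probability. -/
def Outcome (σv : G.Profile) : Set G.Run := { ρ | ∀ k, G.prefixList ρ k ∈ G.HistOf σv }

/-- Histories compatible with a single strategy of player `p`. -/
def HistOfS {p : G.P} (σ : G.Strategy p) : Set (List G.S) :=
  ⋃ τ : G.CoStrategy p, G.HistOf (G.combine σ τ)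

/-- `Pr` assigns to every profile a probability measure on runs which agrees with the
    inductively defined cylinder probabilities. -/
def ValidPr (Pr : G.Profile → Measure G.Run) : Prop :=
  (∀ σv, IsProbabilityMeasure (Pr σv)) ∧
    ∀ σv l, G.IsHistory l → Pr σv (G.Cyl l) = ENNReal.ofReal (G.cylProb σv l)

/-- A profile wins a condition under the sure / almost-sure semantics. -/
def Wins (Pr : G.Profile → Measure G.Run) : Sem → G.Profile → Set G.Run → Prop
  | Sem.Sure, σv, Φ => G.Outcome σv ⊆ Φ
  | Sem.Almost, σv, Φ => Pr σv Φ = 1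

/-- A profile wins a condition from a given history, under each semantics. -/
def WinsFrom (Pr : G.Profile → Measure G.Run) : Sem → G.Profile → Set G.Run → List G.S → Prop
  | Sem.Sure, σv, Φ, l => G.Outcome σv ∩ G.Cyl l ⊆ Φ
  | Sem.Almost, σv, Φ, l => l ∈ G.HistOf σv ∧ Pr σv (Φ ∩ G.Cyl l) / Pr σv (G.Cyl l) = 1

/-- A strategy of `p` is winning if it wins against every coalition strategy. -/
def StratWins (Pr : G.Profile → Measure G.Run) (st : Sem) {p : G.P} (σ : G.Strategy p)
    (Φ : Set G.Run) : Prop :=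
  ∀ τ : G.CoStrategy p, G.Wins Pr st (G.combine σ τ) Φ

/-- A strategy of `p` is winning from a history `l`. -/
def StratWinsFrom (Pr : G.Profile → Measure G.Run) (st : Sem) {p : G.P} (σ : G.Strategy p)
    (Φ : Set G.Run) (l : List G.S) : Prop :=
  ∀ τ : G.CoStrategy p, G.WinsFrom Pr st (G.combine σ τ) Φ l

/-- Weak dominance between strategies of player `p`. -/
def WDom (Pr : G.Profile → Measure G.Run) (win : G.P → Set G.Run) (st : Sem) {p : G.P}
    (σ σ' : G.Strategy p) : Prop :=
  ∀ τ : G.CoStrategy p,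
    G.Wins Pr st (G.combine σ τ) (win p) → G.Wins Pr st (G.combine σ' τ) (win p)

/-- Strict dominance between strategies. -/
def SDom (Pr : G.Profile → Measure G.Run) (win : G.P → Set G.Run) (st : Sem) {p : G.P}
    (σ σ' : G.Strategy p) : Prop :=
  G.WDom Pr win st σ σ' ∧ ¬ G.WDom Pr win st σ' σ

/-- Equivalence of strategies. -/
def EquivS (Pr : G.Profile → Measure G.Run) (win : G.P → Set G.Run) (st : Sem) {p : G.P}
    (σ σ' : G.Strategy p) : Prop :=
  G.WDom Pr win st σ σ' ∧ G.WDom Pr win st σ' σ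

/-- A strategy is admissible iff it is not dominated. -/
def Admissible (Pr : G.Profile → Measure G.Run) (win : G.P → Set G.Run) (st : Sem) {p : G.P}
    (σ : G.Strategy p) : Prop :=
  ∀ σ' : G.Strategy p, ¬ G.SDom Pr win st σ σ'

/-- Weak dominance between randomised moves at a history. -/
def MWDom (Pr : G.Profile → Measure G.Run) (win : G.P → Set G.Run) (st : Sem) {p : G.P}
    (l : List G.S) (α α' : G.Mixed p (G.lastS l)) : Prop :=
  ∀ σ : G.Strategy p, l ∈ G.HistOfS σ → σ l = α →
    ∃ σ' : G.Strategy p, σ' l = α' ∧ G.WDom Pr win st σ σ'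

/-- Equivalence of moves at a history. -/
def MEquiv (Pr : G.Profile → Measure G.Run) (win : G.P → Set G.Run) (st : Sem) {p : G.P}
    (l : List G.S) (α α' : G.Mixed p (G.lastS l)) : Prop :=
  G.MWDom Pr win st l α α' ∧ G.MWDom Pr win st l α' α

/-- Strict dominance between moves at a history. -/
def MSDom (Pr : G.Profile → Measure G.Run) (win : G.P → Set G.Run) (st : Sem) {p : G.P}
    (l : List G.S) (α α' : G.Mixed p (G.lastS l)) : Prop :=
  G.MWDom Pr win st l α α' ∧ ¬ G.MWDom Pr win st l α' α

/-- A move is admissible at a history iff no move dominates it there. -/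
def MAdmissible (Pr : G.Profile → Measure G.Run) (win : G.P → Set G.Run) (st : Sem) {p : G.P}
    (l : List G.S) (α : G.Mixed p (G.lastS l)) : Prop :=
  ∀ α' : G.Mixed p (G.lastS l), ¬ G.MSDom Pr win st l α α'

/-- A strategy is locally admissible (LA) iff it plays admissible moves at every history. -/
def LA (Pr : G.Profile → Measure G.Run) (win : G.P → Set G.Run) (st : Sem) {p : G.P}
    (σ : G.Strategy p) : Prop :=
  ∀ l, G.IsHistory l → G.MAdmissible Pr win st l (σ l)

/-- The value of a history w.r.t. a strategy: 1 if winning from it, 0 if the coalition can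
    both let the strategy win and make it lose, -1 otherwise. -/
def ValStrat (Pr : G.Profile → Measure G.Run) (win : G.P → Set G.Run) (st : Sem) {p : G.P}
    (l : List G.S) (σ : G.Strategy p) : ℤ :=
  if G.StratWinsFrom Pr st σ (win p) l then 1
  else if (∃ τ : G.CoStrategy p, G.WinsFrom Pr st (G.combine σ τ) (win p) l) then 0
  else -1

/-- The value of a history for player `p`: the best value over the player's strategies. -/
def ValH (Pr : G.Profile → Measure G.Run) (win : G.P → Set G.Run) (st : Sem) (p : G.P)
    (l : List G.S) : ℤ :=
  if (∃ σ : G.Strategy p, G.ValStrat Pr win st l σ = 1) then 1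
  else if (∃ σ : G.Strategy p, G.ValStrat Pr win st l σ = 0) then 0
  else -1

/-- Strongly cooperative optimal strategies. -/
def SCO (Pr : G.Profile → Measure G.Run) (win : G.P → Set G.Run) (st : Sem) {p : G.P}
    (σ : G.Strategy p) : Prop :=
  ∀ l ∈ G.HistOfS σ, G.ValStrat Pr win st l σ = G.ValH Pr win st p l

/-- The full action tuple obtained from `a` for `p` and `c` for the coalition. -/
def combAct {p : G.P} (a : G.A) (c : ∀ q : G.P, q ≠ p → G.A) : G.P → G.A :=
  fun q => if h : q = p then (by subst h; exact a) else c q h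

/-- The tuple of one-step distributions obtained from a move of `p` and coalition moves. -/
def combMix {p : G.P} {s : G.S} (α : G.Mixed p s) (γ : ∀ q : G.P, q ≠ p → G.Mixed q s) :
    G.P → G.A → ℝ :=
  fun q => if h : q = p then (by subst h; exact α.1) else (γ q h).1

/-- Simple safety games: each player loses exactly the runs visiting its bad states, and
    bad states are closed under steps. -/
def SimpleSafety (win : G.P → Set G.Run) : Prop :=
  ∃ Bad : G.P → Set G.S,
    (∀ p, win p = { ρ : G.Run | ∀ i, ρ i ∉ Bad p }) ∧
    ∀ p s, s ∈ Bad p → ∀ s', G.Step s s' → s' ∈ Bad p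

/-- Prefix-independent winning conditions. -/
def PrefIndep (Φ : Set G.Run) : Prop :=
  ∀ (ρ : G.Run) (k : ℕ), ρ ∈ Φ ↔ (fun i => ρ (i + k)) ∈ Φ

/-- `stf` and `plf` give the unique state and player where each action is available. -/
def UniqueAvail (stf : G.A → G.S) (plf : G.A → G.P) : Prop :=
  ∀ (q : G.P) (s : G.S) (a : G.A), a ∈ G.act q s → plf a = q ∧ stf a = s

/-- An action of player `q` is ⋆-LA if its Dirac move is admissible at every history where
    it is available. -/
def LAAct (Pr : G.Profile → Measure G.Run) (win : G.P → Set G.Run) (st : Sem)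
    (q : G.P) (a : G.A) : Prop :=
  ∀ (l : List G.S) (_ : G.IsHistory l) (ha : a ∈ G.act q (G.lastS l)),
    G.MAdmissible Pr win st l (G.dirac q (G.lastS l) a ha)

/-- Current `S`-component of a history of the derived game. -/
def dCur (l : List (G.S × (G.P → G.A))) : G.S := (l.getLast?.map Prod.fst).getD G.init

/-- Legal joint action in the derived game: available and ⋆-LA for every player. -/
def DLegal (Pr : G.Profile → Measure G.Run) (win : G.P → Set G.Run) (st : Sem)
    (s : G.S) (m : G.P → G.A) : Prop :=
  ∀ q, m q ∈ G.act q s ∧ G.LAAct Pr win st q (m q)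

/-- Histories of the derived game `G⋆_p` (the part after the initial state). -/
def IsDHistory (Pr : G.Profile → Measure G.Run) (win : G.P → Set G.Run) (st : Sem)
    (l : List (G.S × (G.P → G.A))) : Prop :=
  ∀ i (hi : i < l.length),
    G.DLegal Pr win st (G.dCur (l.take i)) (l.get ⟨i, hi⟩).2 ∧
    (l.get ⟨i, hi⟩).1 = G.tr (G.dCur (l.take i)) (l.get ⟨i, hi⟩).2

/-- Observation of a derived history: the projection to states. -/
def oHist (l : List (G.S × (G.P → G.A))) : List G.S := G.init :: l.map Prod.fst

/-- Observation-based Dirac strategies of player `p` in the derived game. -/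
def IsDStrategy (Pr : G.Profile → Measure G.Run) (win : G.P → Set G.Run) (st : Sem)
    (p : G.P) (σb : List (G.S × (G.P → G.A)) → G.A) : Prop :=
  (∀ l, G.IsDHistory Pr win st l → σb l ∈ G.act p (G.dCur l) ∧ G.LAAct Pr win st p (σb l)) ∧
  (∀ l l', G.oHist l = G.oHist l' → σb l = σb l')

/-- `σb` is a realisation of the strategy `σ` in the derived game. -/
def IsRealisation (Pr : G.Profile → Measure G.Run) (win : G.P → Set G.Run) (st : Sem)
    (p : G.P) (σ : G.Strategy p) (σb : List (G.S × (G.P → G.A)) → G.A) : Prop :=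
  G.IsDStrategy Pr win st p σb ∧
  ∀ l, G.IsDHistory Pr win st l → σb l ∈ G.Supp (σ (G.oHist l))

/-- The prefix of length `k` of a derived run. -/
def dPrefix (ρb : ℕ → G.S × (G.P → G.A)) (k : ℕ) : List (G.S × (G.P → G.A)) :=
  (List.range k).map ρb

/-- Outcome of a player-`p` strategy in the derived game: all derived runs consistent with
    it in which all players play legal ⋆-LA Dirac actions. -/
def DOutcome (Pr : G.Profile → Measure G.Run) (win : G.P → Set G.Run) (st : Sem)
    (p : G.P) (σb : List (G.S × (G.P → G.A)) → G.A) : Set (ℕ → G.S × (G.P → G.A)) :=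
  { ρb | ∀ k,
      G.DLegal Pr win st (G.dCur (G.dPrefix ρb k)) (ρb k).2 ∧
      (ρb k).2 p = σb (G.dPrefix ρb k) ∧
      (ρb k).1 = G.tr (G.dCur (G.dPrefix ρb k)) (ρb k).2 }

/-- Observation of a derived run: the induced run of `G`. -/
def oRun (ρb : ℕ → G.S × (G.P → G.A)) : G.Run :=
  fun k => match k with
  | 0 => G.init
  | Nat.succ n => (ρb n).1

/-- Value of a state for player `q` (well defined for prefix-independent conditions). -/
def ValSt (Pr : G.Profile → Measure G.Run) (win : G.P → Set G.Run) (st : Sem)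
    (q : G.P) (s : G.S) : ℤ :=
  if (∃ l, G.IsHistory l ∧ G.lastS l = s ∧ G.ValH Pr win st q l = 1) then 1
  else if (∃ l, G.IsHistory l ∧ G.lastS l = s ∧ G.ValH Pr win st q l = 0) then 0
  else -1

/-- States of the derived game where player `q` has value 0 but another choice of the
    coalition could have helped `q`. -/
def Help (Pr : G.Profile → Measure G.Run) (win : G.P → Set G.Run) (st : Sem)
    (stf : G.A → G.S) (q : G.P) : Set (G.S × (G.P → G.A)) :=
  { x | G.ValSt Pr win st q x.1 = 0 ∧
      ∃ c : ∀ r : G.P, r ≠ q → G.A, (∀ r hr, c r hr ∈ G.act r (stf (x.2 q))) ∧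
        0 ≤ G.ValSt Pr win st q (G.tr (stf (x.2 q)) (G.combAct (x.2 q) c)) ∧
        G.tr (stf (x.2 q)) (G.combAct (x.2 q) c) ≠ x.1 }

/-- The formula φ⁰_q evaluated on a derived run. -/
def phi0 (Pr : G.Profile → Measure G.Run) (win : G.P → Set G.Run) (st : Sem)
    (stf : G.A → G.S) (q : G.P) (ρb : ℕ → G.S × (G.P → G.A)) : Prop :=
  (∃ k, G.ValSt Pr win st q (G.oRun ρb k) ≠ 0) ∨
  (G.oRun ρb ∈ win q) ∨
  (∀ k, ∃ j, k ≤ j ∧ ρb j ∈ G.Help Pr win st stf q)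

/-- The formula φ¹_q evaluated on a derived run. -/
def phi1 (Pr : G.Profile → Measure G.Run) (win : G.P → Set G.Run) (st : Sem)
    (q : G.P) (ρb : ℕ → G.S × (G.P → G.A)) : Prop :=
  (∃ k, G.ValSt Pr win st q (G.oRun ρb k) = 1) → G.oRun ρb ∈ win q

/-- ω-regular sets of runs: recognised by a deterministic finite parity automaton. -/
def IsOmegaRegular (Φ : Set G.Run) : Prop :=
  ∃ (Q : Type) (_ : Fintype Q) (q0 : Q) (d : Q → G.S → Q) (c : Q → ℕ),
    Φ = { ρ : G.Run | ∃ n, Even n ∧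
      Set.Infinite { k | c (autRun q0 d ρ k) = n } ∧
      ∀ m, Set.Infinite { k | c (autRun q0 d ρ k) = m } → n ≤ m }

/-- Finite-memory strategies: realised by a finite stochastic Moore machine. -/
def FiniteMemory {p : G.P} (σ : G.Strategy p) : Prop :=
  ∃ (M : Type) (_ : Fintype M) (m0 : M) (upd : M → G.S → M)
    (out : M → (s : G.S) → G.Mixed p s),
    ∀ l : List G.S, σ l = out (l.foldl upd m0) (G.lastS l)

end ConcGame

/-!
Suppose a randomised move `α` strictly dominates the Dirac move on `a` at `h`, and let `b` be an
action in the support of `α`. Replacing `α` by `b` at `h` never turns a win into a loss. Every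
cylinder probability under `α` is the `α`-mixture of those under the Dirac moves, so every
outcome of the modified strategy is an outcome of the original one; and the outcome measure of
the original strategy is the `α`-mixture of those of the modified ones, so an almost-sure win
survives in every component of positive weight. Hence the Dirac move on `b` also strictly
dominates the one on `a`.
-/

theorem Finset.sum_mul_prod_eq_of_eq_of_ne {ι κ R : Type*} [Fintype κ] [CommSemiring R]
    [DecidableEq ι] {s : Finset ι} {a : κ → R} {g : κ → ι → R} {g₀ : ι → R} (i₀ : ι)
    (ha : ∑ c, a c = 1) (hi₀ : ∑ c, a c * g c i₀ = g₀ i₀)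
    (hne : ∀ c, ∀ i ∈ s, i ≠ i₀ → g c i = g₀ i) :
    ∑ c, a c * ∏ i ∈ s, g c i = ∏ i ∈ s, g₀ i := by
  by_cases h : i₀ ∈ s
  · have hrest : ∀ c, ∏ i ∈ s \ {i₀}, g c i = ∏ i ∈ s \ {i₀}, g₀ i := fun c =>
      Finset.prod_congr rfl fun i hi => by
        rw [Finset.mem_sdiff, Finset.mem_singleton] at hi
        exact hne c i hi.1 hi.2
    simp_rw [Finset.prod_eq_mul_prod_sdiff_singleton_of_mem h, hrest, ← mul_assoc,
      ← Finset.sum_mul, hi₀]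
  · have hall : ∀ c, ∏ i ∈ s, g c i = ∏ i ∈ s, g₀ i := fun c =>
      Finset.prod_congr rfl fun i hi => hne c i hi (ne_of_mem_of_not_mem hi h)
    simp_rw [hall, ← Finset.sum_mul, ha, one_mul]

theorem List.take_succ_ne_of_ne {α : Type*} {w l : List α} {i : ℕ} (hi : i < w.length)
    (h : i + 1 ≠ l.length) : w.take (i + 1) ≠ l := by
  rintro rfl
  simp only [List.length_take] at h
  omega

theorem MeasureTheory.Measure.apply_eq_one_of_eq_sum_smul {Ω ι : Type*} [MeasurableSpace Ω]
    [Fintype ι] {μ : Measure Ω} {ν : ι → Measure Ω} {a : ι → ENNReal} [IsProbabilityMeasure μ]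
    [∀ i, IsProbabilityMeasure (ν i)] (h : μ = ∑ i, a i • ν i) {s : Set Ω}
    (hs : MeasurableSet s) (hμs : μ s = 1) {i : ι} (hi : a i ≠ 0) : ν i s = 1 := by
  rw [← prob_compl_eq_zero_iff hs] at hμs ⊢
  rw [h, Measure.coe_finsetSum, Finset.sum_apply, Finset.sum_eq_zero_iff] at hμs
  simpa [hi] using hμs i (Finset.mem_univ i)

namespace ConcGame

variable (G : ConcGame)

section Basic

variable {G} {p : G.P} {s : G.S}

lemma Mixed.nonneg (α : G.Mixed p s) (a : G.A) : 0 ≤ α.1 a := α.2.1 a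

lemma Mixed.sum_eq_one (α : G.Mixed p s) : ∑ a, α.1 a = 1 := α.2.2.1

lemma Mixed.mem_act (α : G.Mixed p s) {a : G.A} (ha : α.1 a ≠ 0) : a ∈ G.act p s :=
  α.2.2.2 a ha

lemma Mixed.exists_ne_zero (α : G.Mixed p s) : ∃ a, α.1 a ≠ 0 := by
  by_contra! h
  simpa [h] using α.sum_eq_one

lemma combine_self (σ : G.Strategy p) (τ : G.CoStrategy p) : G.combine σ τ p = σ :=
  dif_pos rfl

lemma combine_of_ne {q : G.P} (σ : G.Strategy p) (τ : G.CoStrategy p) (h : q ≠ p) :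
    G.combine σ τ q = τ q h :=
  dif_neg h

theorem WDom.trans {Pr : G.Profile → Measure G.Run} {win : G.P → Set G.Run} {st : Sem}
    {σ₁ σ₂ σ₃ : G.Strategy p} (h₁₂ : G.WDom Pr win st σ₁ σ₂) (h₂₃ : G.WDom Pr win st σ₂ σ₃) :
    G.WDom Pr win st σ₁ σ₃ :=
  fun τ h => h₂₃ τ (h₁₂ τ h)

end Basic

section StepProbabilities

lemma stepProb_nonneg (s s' : G.S) {β : G.P → G.A → ℝ} (hβ : ∀ q a, 0 ≤ β q a) :
    0 ≤ G.stepProb s β s' :=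
  Finset.sum_nonneg fun m _ => Finset.prod_nonneg fun q _ => hβ q (m q)

lemma sum_stepProb (s : G.S) {β : G.P → G.A → ℝ} (hβ : ∀ q, ∑ a, β q a = 1) :
    ∑ s', G.stepProb s β s' = 1 := by
  simp only [stepProb]
  rw [Finset.sum_fiberwise, ← Fintype.piFinset_univ, ← Finset.prod_univ_sum]
  simp [hβ]

lemma stepProb_eq_zero_of_not_step {s s' : G.S} {β : G.P → G.A → ℝ}
    (hβ : ∀ q a, β q a ≠ 0 → a ∈ G.act q s) (h : ¬ G.Step s s') : G.stepProb s β s' = 0 := by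
  refine Finset.sum_eq_zero fun m hm => Finset.prod_eq_zero_iff.2 ?_
  by_contra! hpos
  exact h ⟨m, fun q => hβ q _ (hpos q (Finset.mem_univ q)), (Finset.mem_filter.1 hm).2⟩

lemma sum_mul_stepProb_update (s s' : G.S) (β : G.P → G.A → ℝ) (p : G.P) :
    ∑ c, β p c * G.stepProb s (Function.update β p (Pi.single c 1)) s' = G.stepProb s β s' := by
  simp only [stepProb, Finset.mul_sum]
  rw [Finset.sum_comm]
  refine Finset.sum_congr rfl fun m _ => ?_
  simp only [Function.apply_update (fun q (f : G.A → ℝ) => f (m q)),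
    Finset.prod_update_of_mem (Finset.mem_univ p), ← mul_assoc, ← Finset.sum_mul]
  simp [Pi.single_apply, Finset.prod_eq_mul_prod_sdiff_singleton_of_mem (Finset.mem_univ p)]

end StepProbabilities

section CylinderProbabilities

lemma lastS_take (w : List G.S) {i : ℕ} (h : i < w.length) :
    G.lastS (w.take (i + 1)) = w[i] := by
  simp [lastS, List.getLast?_eq_getElem?, h]

lemma lastS_append_singleton (u : List G.S) (s : G.S) : G.lastS (u ++ [s]) = s := by
  simp [lastS]

lemma cylProb_nonneg (σv : G.Profile) (w : List G.S) : 0 ≤ G.cylProb σv w :=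
  Finset.prod_nonneg fun _ _ => G.stepProb_nonneg _ _ fun q => (σv q _).nonneg

lemma cylProb_eq_zero_of_not_isChain (σv : G.Profile) {w : List G.S}
    (hw : ¬ w.IsChain G.Step) : G.cylProb σv w = 0 := by
  obtain ⟨i, hi, hstep⟩ : ∃ i, ∃ h : i + 1 < w.length, ¬ G.Step w[i] w[i + 1] := by
    simpa [List.isChain_iff_getElem] using hw
  refine Finset.prod_eq_zero (i := i) (Finset.mem_range.2 (by omega)) ?_
  refine G.stepProb_eq_zero_of_not_step (fun q a ha => (σv q _).mem_act ha) ?_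
  rwa [G.lastS_take w (i := i) (by omega), G.lastS_take w hi]

lemma cylProb_append_singleton (σv : G.Profile) {u : List G.S} (hu : u ≠ []) (s : G.S) :
    G.cylProb σv (u ++ [s])
      = G.cylProb σv u * G.stepProb (G.lastS u) (fun q => (σv q u).1) s := by
  obtain ⟨n, hn⟩ : ∃ n, u.length = n + 1 := Nat.exists_eq_succ_of_ne_zero (by simpa using hu)
  have htake : ∀ k ≤ u.length, (u ++ [s]).take k = u.take k := fun k hk =>
    List.take_append_of_le_length hk
  simp only [cylProb, List.length_append, List.length_singleton, hn, Nat.add_sub_cancel,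
    Finset.prod_range_succ]
  congr 1
  · exact Finset.prod_congr rfl fun i hi => by
      rw [Finset.mem_range] at hi
      rw [htake _ (by omega), htake _ (by omega)]
  · rw [htake _ hn.ge, ← hn, List.take_length, List.take_of_length_le (by simp [hn]),
      lastS_append_singleton]

/-- `cylProb` ignores the first state of a word; `cylWeight` also requires it to be the
initial state, and is the probability of the cylinder of every nonempty word. -/
def cylWeight (σv : G.Profile) (w : List G.S) : ℝ :=
  if w.head? = some G.init then G.cylProb σv w else 0

lemma cylWeight_nonneg (σv : G.Profile) (w : List G.S) : 0 ≤ G.cylWeight σv w := by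
  unfold cylWeight
  split_ifs
  exacts [G.cylProb_nonneg σv w, le_rfl]

lemma cylWeight_eq_zero_of_not_isHistory (σv : G.Profile) {w : List G.S}
    (hw : ¬ G.IsHistory w) : G.cylWeight σv w = 0 := by
  unfold cylWeight
  split_ifs with hhead
  · exact G.cylProb_eq_zero_of_not_isChain σv fun hchain => hw ⟨hhead, hchain⟩
  · rfl

lemma cylWeight_append_singleton (σv : G.Profile) {u : List G.S} (hu : u ≠ []) (s : G.S) :
    G.cylWeight σv (u ++ [s])
      = G.cylWeight σv u * G.stepProb (G.lastS u) (fun q => (σv q u).1) s := by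
  unfold cylWeight
  rw [List.head?_append_of_ne_nil _ hu]
  split_ifs
  · exact G.cylProb_append_singleton σv hu s
  · rw [zero_mul]

lemma sum_cylWeight_ofFn (σv : G.Profile) (n : ℕ) :
    ∑ w : Fin (n + 1) → G.S, G.cylWeight σv (List.ofFn w) = 1 := by
  induction n with
  | zero =>
    rw [← (Equiv.funUnique (Fin 1) G.S).symm.sum_comp]
    simp [cylWeight, cylProb]
  | succ n ih =>
    rw [← (Fin.snocEquiv fun _ => G.S).sum_comp, Fintype.sum_prod_type, Finset.sum_comm]
    refine Eq.trans (Finset.sum_congr rfl fun w _ => ?_) ih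
    have hw : List.ofFn w ≠ [] := List.ne_nil_of_length_pos (by simp)
    have hofn : ∀ s, List.ofFn (Fin.snocEquiv (fun _ => G.S) (s, w)) = List.ofFn w ++ [s] := by
      intro s
      rw [List.ofFn_succ', List.concat_eq_append]
      simp [Fin.snocEquiv]
    simp_rw [hofn, G.cylWeight_append_singleton σv hw, ← Finset.mul_sum,
      G.sum_stepProb _ fun q => (σv q _).sum_eq_one, mul_one]

end CylinderProbabilities

section CylinderMeasures

lemma mem_cyl_ofFn {n : ℕ} (w : Fin n → G.S) (ρ : G.Run) :
    ρ ∈ G.Cyl (List.ofFn w) ↔ ∀ j : Fin n, ρ j = w j := by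
  simp only [Cyl, Set.mem_ofPred_eq, List.length_ofFn, List.getD_eq_getElem?_getD,
    List.getElem?_ofFn, Fin.forall_iff]
  exact forall₂_congr fun i hi => by simp [hi]

lemma measurableSet_cyl_ofFn {n : ℕ} (w : Fin n → G.S) :
    MeasurableSet (G.Cyl (List.ofFn w)) := by
  have : G.Cyl (List.ofFn w) = ⋂ j : Fin n, (fun ρ : G.Run => ρ j) ⁻¹' {w j} := by
    ext ρ
    simp [mem_cyl_ofFn]
  rw [this]
  exact MeasurableSet.iInter fun j => measurable_pi_apply _ (MeasurableSet.singleton _)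

lemma pairwise_disjoint_cyl_ofFn (n : ℕ) :
    Pairwise (Function.onFun Disjoint fun w : Fin n → G.S => G.Cyl (List.ofFn w)) := by
  intro v w hvw
  refine Set.disjoint_left.2 fun ρ hv hw => hvw (funext fun j => ?_)
  rw [← (G.mem_cyl_ofFn v ρ).1 hv j, (G.mem_cyl_ofFn w ρ).1 hw j]

lemma iUnion_cyl_ofFn (n : ℕ) : ⋃ w : Fin n → G.S, G.Cyl (List.ofFn w) = Set.univ :=
  Set.eq_univ_of_forall fun ρ =>
    Set.mem_iUnion.2 ⟨fun j => ρ j, (G.mem_cyl_ofFn _ ρ).2 fun _ => rfl⟩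

/-- The empty word is left out: its cylinder is everything, but its `cylWeight` is `0`. -/
def cylinders : Set (Set G.Run) :=
  {A | ∃ n, ∃ w : Fin (n + 1) → G.S, A = G.Cyl (List.ofFn w)}

lemma isPiSystem_cylinders : IsPiSystem G.cylinders := by
  have key : ∀ {m n : ℕ} (v : Fin (m + 1) → G.S) (w : Fin (n + 1) → G.S), m ≤ n →
      (G.Cyl (List.ofFn v) ∩ G.Cyl (List.ofFn w)).Nonempty →
      G.Cyl (List.ofFn v) ∩ G.Cyl (List.ofFn w) = G.Cyl (List.ofFn w) := by
    rintro m n v w hmn ⟨ρ, hv, hw⟩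
    refine Set.inter_eq_right.2 fun ρ' hw' => (G.mem_cyl_ofFn v ρ').2 fun j => ?_
    have hj : (j : ℕ) < n + 1 := by have := j.isLt; omega
    rw [← (G.mem_cyl_ofFn v ρ).1 hv j, (G.mem_cyl_ofFn w ρ').1 hw' ⟨j, hj⟩,
      (G.mem_cyl_ofFn w ρ).1 hw ⟨j, hj⟩]
  rintro _ ⟨m, v, rfl⟩ _ ⟨n, w, rfl⟩ hne
  rcases le_total m n with hmn | hnm
  · exact ⟨n, w, key v w hmn hne⟩
  · rw [Set.inter_comm] at hne ⊢
    exact ⟨m, v, key w v hnm hne⟩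

lemma generateFrom_cylinders :
    MeasurableSpace.generateFrom G.cylinders = (inferInstance : MeasurableSpace G.Run) := by
  refine le_antisymm (MeasurableSpace.generateFrom_le ?_) (iSup_le fun i => ?_)
  · rintro _ ⟨n, w, rfl⟩
    exact G.measurableSet_cyl_ofFn w
  let := MeasurableSpace.generateFrom G.cylinders
  refine Measurable.comap_le (measurable_to_countable' fun s => ?_)
  have : (fun ρ : G.Run => ρ i) ⁻¹' {s}
      = ⋃ (w : Fin (i + 1) → G.S) (_ : w (Fin.last i) = s), G.Cyl (List.ofFn w) := by
    ext ρ
    simp only [Set.mem_preimage, Set.mem_singleton_iff, Set.mem_iUnion, mem_cyl_ofFn,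
      exists_prop]
    exact ⟨fun h => ⟨fun j => ρ j, h, fun _ => rfl⟩, fun ⟨w, hw, hρ⟩ => hw ▸ hρ (Fin.last i)⟩
  rw [this]
  exact MeasurableSet.iUnion fun w => MeasurableSet.iUnion fun _ =>
    MeasurableSpace.measurableSet_generateFrom ⟨i, w, rfl⟩

lemma ext_of_cyl {μ ν : Measure G.Run} [IsProbabilityMeasure μ] [IsProbabilityMeasure ν]
    (h : ∀ n (w : Fin (n + 1) → G.S), μ (G.Cyl (List.ofFn w)) = ν (G.Cyl (List.ofFn w))) :
    μ = ν :=
  ext_of_generate_finite _ G.generateFrom_cylinders.symm G.isPiSystem_cylinders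
    (by rintro _ ⟨n, w, rfl⟩; exact h n w) (by simp)

variable {G} {Pr : G.Profile → Measure G.Run}

/-- `ValidPr` only prescribes the cylinders of histories. The others are null: the cylinders of
the words of a given length partition the runs, and the weights of the histories among them
already sum to `1`. -/
lemma ValidPr.measureReal_cyl_ofFn (hPr : G.ValidPr Pr) (σv : G.Profile) {n : ℕ}
    (w : Fin (n + 1) → G.S) :
    (Pr σv).real (G.Cyl (List.ofFn w)) = G.cylWeight σv (List.ofFn w) := by
  have := hPr.1 σv
  have hle : ∀ v ∈ (Finset.univ : Finset (Fin (n + 1) → G.S)),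
      G.cylWeight σv (List.ofFn v) ≤ (Pr σv).real (G.Cyl (List.ofFn v)) := by
    intro v _
    by_cases hv : G.IsHistory (List.ofFn v)
    · rw [measureReal_def, hPr.2 σv _ hv, ENNReal.toReal_ofReal (G.cylProb_nonneg σv _),
        cylWeight, if_pos hv.1]
    · rw [G.cylWeight_eq_zero_of_not_isHistory σv hv]
      exact measureReal_nonneg
  have hsum : ∑ v : Fin (n + 1) → G.S, G.cylWeight σv (List.ofFn v)
      = ∑ v : Fin (n + 1) → G.S, (Pr σv).real (G.Cyl (List.ofFn v)) := by
    rw [G.sum_cylWeight_ofFn, ← measureReal_iUnion_fintype (G.pairwise_disjoint_cyl_ofFn _)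
      G.measurableSet_cyl_ofFn, G.iUnion_cyl_ofFn, probReal_univ]
  exact ((Finset.sum_eq_sum_iff_of_le hle).1 hsum w (Finset.mem_univ w)).symm

lemma ValidPr.measure_cyl_ofFn (hPr : G.ValidPr Pr) (σv : G.Profile) {n : ℕ}
    (w : Fin (n + 1) → G.S) :
    Pr σv (G.Cyl (List.ofFn w)) = ENNReal.ofReal (G.cylWeight σv (List.ofFn w)) := by
  have := hPr.1 σv
  rw [← hPr.measureReal_cyl_ofFn σv w, ofReal_measureReal]

end CylinderMeasures

/-- `σ` switched to the Dirac move on `c` at `l`, or unchanged if `c` is not available there. -/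
def setDirac {p : G.P} (σ : G.Strategy p) (l : List G.S) (c : G.A) : G.Strategy p :=
  fun l' => if h : l' = l ∧ c ∈ G.act p (G.lastS l) then h.1 ▸ G.dirac p _ c h.2 else σ l'

section setDirac

variable {G} {p : G.P} (σ : G.Strategy p) (τ : G.CoStrategy p) {l : List G.S}
  {α : G.Mixed p (G.lastS l)} {b c : G.A}

lemma setDirac_self (hc : c ∈ G.act p (G.lastS l)) :
    G.setDirac σ l c l = G.dirac p (G.lastS l) c hc :=
  dif_pos ⟨rfl, hc⟩

lemma combine_setDirac_of_ne {t : List G.S} (ht : t ≠ l) (q : G.P) :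
    G.combine (G.setDirac σ l c) τ q t = G.combine σ τ q t := by
  by_cases hq : q = p
  · subst hq
    simp only [combine_self]
    exact dif_neg fun h => ht h.1
  · simp only [combine_of_ne _ _ hq]

lemma combine_setDirac_self (hc : c ∈ G.act p (G.lastS l)) :
    (fun q => (G.combine (G.setDirac σ l c) τ q l).1)
      = Function.update (fun q => (G.combine σ τ q l).1) p (Pi.single c 1) := by
  funext q
  by_cases hq : q = p
  · subst hq
    ext x
    simp [combine_self, setDirac_self σ hc, dirac, Pi.single_apply]
  · simp [combine_of_ne _ _ hq, hq]

lemma sum_mul_stepProb_setDirac (hσ : σ l = α) (t : List G.S) (s s' : G.S) :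
    ∑ c, α.1 c * G.stepProb s (fun q => (G.combine (G.setDirac σ l c) τ q t).1) s'
      = G.stepProb s (fun q => (G.combine σ τ q t).1) s' := by
  by_cases ht : t = l
  · subst ht
    rw [← G.sum_mul_stepProb_update s s' _ p]
    refine Finset.sum_congr rfl fun c _ => ?_
    rcases eq_or_ne (α.1 c) 0 with hc | hc
    · simp [combine_self, hσ, hc]
    · rw [combine_setDirac_self σ τ (α.mem_act hc), combine_self, hσ]
  · simp only [combine_setDirac_of_ne σ τ ht, ← Finset.sum_mul, α.sum_eq_one, one_mul]

lemma cylProb_combine_setDirac_self (c : G.A) :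
    G.cylProb (G.combine (G.setDirac σ l c) τ) l = G.cylProb (G.combine σ τ) l := by
  refine Finset.prod_congr rfl fun i hi => ?_
  rw [Finset.mem_range] at hi
  have hne : l.take (i + 1) ≠ l := List.take_succ_ne_of_ne (by omega) (by omega)
  simp only [combine_setDirac_of_ne σ τ hne]

/-- Only the factor of index `l.length - 1`, the step leaving `l`, depends on the move at `l`. -/
lemma cylProb_eq_sum_mul (hσ : σ l = α) (w : List G.S) :
    G.cylProb (G.combine σ τ) w
      = ∑ c, α.1 c * G.cylProb (G.combine (G.setDirac σ l c) τ) w := by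
  refine (Finset.sum_mul_prod_eq_of_eq_of_ne (l.length - 1) α.sum_eq_one
    (sum_mul_stepProb_setDirac σ τ hσ _ _ _) fun c i hi hil => ?_).symm
  rw [Finset.mem_range] at hi
  have hne : w.take (i + 1) ≠ l := List.take_succ_ne_of_ne (by omega) (by omega)
  simp only [combine_setDirac_of_ne σ τ hne]

lemma cylWeight_eq_sum_mul (hσ : σ l = α) (w : List G.S) :
    G.cylWeight (G.combine σ τ) w
      = ∑ c, α.1 c * G.cylWeight (G.combine (G.setDirac σ l c) τ) w := by
  unfold cylWeight
  split_ifs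
  · exact G.cylProb_eq_sum_mul σ τ hσ w
  · simp

lemma mem_histOfS_setDirac (hl : l ∈ G.HistOfS σ) (c : G.A) :
    l ∈ G.HistOfS (G.setDirac σ l c) := by
  obtain ⟨τ, hτ, hpos⟩ := Set.mem_iUnion.1 hl
  exact Set.mem_iUnion.2 ⟨τ, hτ, (cylProb_combine_setDirac_self σ τ c).symm ▸ hpos⟩

lemma outcome_combine_setDirac_subset (hσ : σ l = α) (hb : α.1 b ≠ 0) :
    G.Outcome (G.combine (G.setDirac σ l b) τ) ⊆ G.Outcome (G.combine σ τ) := by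
  intro ρ hρ k
  obtain ⟨hhist, hpos⟩ := hρ k
  refine ⟨hhist, ?_⟩
  rw [G.cylProb_eq_sum_mul σ τ hσ]
  have hle : α.1 b * G.cylProb (G.combine (G.setDirac σ l b) τ) (G.prefixList ρ k)
      ≤ ∑ c, α.1 c * G.cylProb (G.combine (G.setDirac σ l c) τ) (G.prefixList ρ k) :=
    Finset.single_le_sum (f := fun c => α.1 c * G.cylProb (G.combine (G.setDirac σ l c) τ) _)
      (fun c _ => mul_nonneg (α.nonneg c) (G.cylProb_nonneg _ _)) (Finset.mem_univ b)
  exact (mul_pos ((α.nonneg b).lt_of_ne hb.symm) hpos).trans_le hle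

variable {Pr : G.Profile → Measure G.Run}

lemma ValidPr.eq_sum_smul (hPr : G.ValidPr Pr) (hσ : σ l = α) :
    Pr (G.combine σ τ) = ∑ c, ENNReal.ofReal (α.1 c) • Pr (G.combine (G.setDirac σ l c) τ) := by
  have := hPr.1
  have hα : ∑ c, ENNReal.ofReal (α.1 c) = 1 := by
    rw [← ENNReal.ofReal_sum_of_nonneg fun c _ => α.nonneg c, α.sum_eq_one, ENNReal.ofReal_one]
  have : IsProbabilityMeasure
      (∑ c, ENNReal.ofReal (α.1 c) • Pr (G.combine (G.setDirac σ l c) τ)) :=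
    ⟨by simp [hα]⟩
  refine G.ext_of_cyl fun n w => ?_
  simp only [Measure.coe_finsetSum, Finset.sum_apply, Measure.smul_apply, smul_eq_mul,
    hPr.measure_cyl_ofFn, ← ENNReal.ofReal_mul (α.nonneg _), G.cylWeight_eq_sum_mul σ τ hσ]
  exact ENNReal.ofReal_sum_of_nonneg fun c _ =>
    mul_nonneg (α.nonneg c) (G.cylWeight_nonneg _ _)

lemma wdom_setDirac {win : G.P → Set G.Run} {st : Sem} (hPr : G.ValidPr Pr)
    (hwin : MeasurableSet (win p)) (hσ : σ l = α) (hb : α.1 b ≠ 0) :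
    G.WDom Pr win st σ (G.setDirac σ l b) := by
  intro τ hτ
  cases st with
  | Sure => exact (outcome_combine_setDirac_subset σ τ hσ hb).trans hτ
  | Almost =>
    have := hPr.1
    exact Measure.apply_eq_one_of_eq_sum_smul (hPr.eq_sum_smul σ τ hσ) hwin hτ
      (ENNReal.ofReal_pos.2 ((α.nonneg b).lt_of_ne hb.symm)).ne'

end setDirac

end ConcGame

theorem stmt2_general (G : ConcGame) (win : G.P → Set G.Run)
    (hwin : ∀ p, MeasurableSet (win p))
    (Pr : G.Profile → Measure G.Run) (hPr : G.ValidPr Pr)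
    (st : ConcGame.Sem) (p : G.P) (l : List G.S)
    (a : G.A) (ha : a ∈ G.act p (G.lastS l))
    (hnd : ∀ α' : G.Mixed p (G.lastS l), G.IsDirac α' →
      ¬ G.MSDom Pr win st l (G.dirac p (G.lastS l) a ha) α') :
    G.MAdmissible Pr win st l (G.dirac p (G.lastS l) a ha) := by
  rintro α ⟨hdom, hnot⟩
  obtain ⟨b, hb⟩ := α.exists_ne_zero
  have hb' := α.mem_act hb
  refine hnd (G.dirac p _ b hb') ⟨b, if_pos rfl⟩
    ⟨fun σ hσl hσ => ?_, fun hba => hnot fun σ hσl hσ => ?_⟩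
  · obtain ⟨σ', hσ', hσσ'⟩ := hdom σ hσl hσ
    exact ⟨G.setDirac σ' l b, ConcGame.setDirac_self σ' hb',
      hσσ'.trans (ConcGame.wdom_setDirac σ' hPr (hwin p) hσ' hb)⟩
  · obtain ⟨σ', hσ', hσσ'⟩ :=
      hba (G.setDirac σ l b) (ConcGame.mem_histOfS_setDirac σ hσl b)
        (ConcGame.setDirac_self σ hb')
    exact ⟨σ', hσ', (ConcGame.wdom_setDirac σ hPr (hwin p) hσ hb).trans hσσ'⟩

/-- Dirac moves not dominated at `l` by any Dirac move are admissible at `l`. -/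
theorem stmt2 (G : ConcGame) (win : G.P → Set G.Run)
    (hwin : ∀ p, MeasurableSet (win p))
    (Pr : G.Profile → Measure G.Run) (hPr : G.ValidPr Pr)
    (st : ConcGame.Sem) (p : G.P) (l : List G.S) (hl : G.IsHistory l)
    (a : G.A) (ha : a ∈ G.act p (G.lastS l))
    (hnd : ∀ α' : G.Mixed p (G.lastS l), G.IsDirac α' →
      ¬ G.MSDom Pr win st l (G.dirac p (G.lastS l) a ha) α') :
    G.MAdmissible Pr win st l (G.dirac p (G.lastS l) a ha) :=
  stmt2_general G win hwin Pr hPr st p l a ha hnd
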